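/- arXiv:1708.02516 — 6 statements merged into one kernel-verified Lean document; each statement's English description precedes it below -/
import Mathlib

section
/- Let X be a first countable Hausdorff real topological vector space, μ a nonzero Borel measure on X that is finite on bounded sets, and K a bounded open neighbourhood of the origin. If E ⊆ X is topologically dense in X, then a point u is an E-strong mode of μ if and only if u is a strong mode of μ. -/
open MeasureTheory Filter Set Topology
open scoped ENNReal NNReal

/-- `fK μ K x r = μ(x + r • K)`, the mass of the scaled translated copy of `K`. -/
noncomputable def fK {X : Type*} [AddCommGroup X] [Module ℝ X] [MeasurableSpace X]
    (μ : Measure X) (K : Set X) (x : X) (r : ℝ) : ℝ≥0∞ :=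
  μ ((fun y => x + r • y) '' K)

/-- The topological support of a Borel measure. -/
def measSupport {X : Type*} [TopologicalSpace X] [MeasurableSpace X]
    (μ : Measure X) : Set X :=
  {x | ∀ U : Set X, IsOpen U → x ∈ U → 0 < μ U}

/-- `u` is a strong mode of `μ` (w.r.t. the reference neighbourhood `K`). -/
def IsStrongMode {X : Type*} [AddCommGroup X] [Module ℝ X] [TopologicalSpace X]
    [MeasurableSpace X] (μ : Measure X) (K : Set X) (u : X) : Prop :=
  Tendsto (fun r : ℝ => (⨆ z : X, fK μ K z r) / fK μ K u r) (𝓝[>] (0:ℝ)) (𝓝 1)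

/-- `u` is an `E`-strong mode of `μ`. -/
def IsEStrongMode {X : Type*} [AddCommGroup X] [Module ℝ X] [TopologicalSpace X]
    [MeasurableSpace X] (μ : Measure X) (K : Set X) (E : Set X) (u : X) : Prop :=
  u ∈ measSupport μ ∧
    limsup (fun r : ℝ => (⨆ v ∈ E, fK μ K (u - v) r) / fK μ K u r) (𝓝[>] (0:ℝ)) ≤ 1

/-- `u` is an `E`-weak mode of `μ`. -/
def IsEWeakMode {X : Type*} [AddCommGroup X] [Module ℝ X] [TopologicalSpace X]
    [MeasurableSpace X] (μ : Measure X) (K : Set X) (E : Set X) (u : X) : Prop :=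
  u ∈ measSupport μ ∧
    ∀ v ∈ E, limsup (fun r : ℝ => fK μ K (u - v) r / fK μ K u r) (𝓝[>] (0:ℝ)) ≤ 1

/-- The uniformity condition for the pair `(u, E)`. -/
def UniformityCondition {X : Type*} [AddCommGroup X] [Module ℝ X]
    [MeasurableSpace X] (μ : Measure X) (K : Set X) (E : Set X) (u : X) : Prop :=
  ∃ v ∈ E, ∃ rs : ℝ, rs ∈ Set.Ioo (0:ℝ) 1 ∧
    ∀ r ∈ Set.Ioo (0:ℝ) rs, fK μ K (u - v) r = ⨆ w ∈ E, fK μ K (u - w) r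

/-- The coincident limiting ratios condition for the pair `(u, E)`. -/
def CLRCondition {X : Type*} [AddCommGroup X] [Module ℝ X] [MeasurableSpace X]
    (μ : Measure X) (K : Set X) (E : Set X) (u : X) : Prop :=
  limsup (fun r : ℝ => (⨆ v ∈ E, fK μ K (u - v) r) / fK μ K u r) (𝓝[>] (0:ℝ)) =
    limsup (fun r : ℝ => (⨆ z : X, fK μ K z r) / fK μ K u r) (𝓝[>] (0:ℝ))

/-!
For `r ≠ 0` the translates `z + r • K` are open, so `z ↦ μ (z + r • K)` is sequentially lower
semicontinuous: the limit point's translate is covered by the lim inf of the translates along a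
convergent sequence. As `u - E` is dense and `X` is first countable, the supremum of
`μ (z + r • K)` over `z ∈ u - E` is therefore the supremum over all of `X`, and the two ratios
agree for every `r > 0`. It remains that a strong mode lies in the support (small dilates of the
bounded set `K` fit into any neighbourhood of `0`), and that at a point of the support the ratio
is at least `1`, so a lim sup at most `1` already forces convergence to `1`.
-/

open scoped Pointwise

lemma measure_vadd_le_iSup_of_tendsto {X : Type*} [AddGroup X] [TopologicalSpace X]
    [IsTopologicalAddGroup X] [MeasurableSpace X] {μ : Measure X} {S : Set X} (hS : IsOpen S)
    {w : ℕ → X} {z : X} (hw : Tendsto w atTop (𝓝 z)) :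
    μ (z +ᵥ S) ≤ ⨆ n, μ (w n +ᵥ S) := by
  set T : ℕ → Set X := fun N => ⋂ n ≥ N, w n +ᵥ S
  have hT : Monotone T := fun a b hab =>
    biInter_subset_biInter_left fun n (hn : b ≤ n) => le_trans hab hn
  have hcover : z +ᵥ S ⊆ ⋃ N, T N := by
    intro x hx
    rw [mem_vadd_set_iff_neg_vadd_mem, vadd_eq_add] at hx
    have hlim : Tendsto (fun n => -w n + x) atTop (𝓝 (-z + x)) := hw.neg.add_const x
    obtain ⟨N, hN⟩ := eventually_atTop.mp (hlim.eventually_mem (hS.mem_nhds hx))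
    refine mem_iUnion.2 ⟨N, mem_iInter₂.2 fun n hn => ?_⟩
    rw [mem_vadd_set_iff_neg_vadd_mem, vadd_eq_add]
    exact hN n hn
  calc μ (z +ᵥ S) ≤ μ (⋃ N, T N) := measure_mono hcover
    _ = ⨆ N, μ (T N) := hT.measure_iUnion
    _ ≤ ⨆ N, μ (w N +ᵥ S) := iSup_mono fun N => measure_mono (iInter₂_subset N le_rfl)

section Modes

variable {X : Type*} [AddCommGroup X] [Module ℝ X] [MeasurableSpace X] {μ : Measure X}
  {K : Set X}

lemma fK_eq_measure_vadd_smul (μ : Measure X) (K : Set X) (x : X) (r : ℝ) :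
    fK μ K x r = μ (x +ᵥ r • K) := by
  rw [fK, ← Set.image_smul, ← Set.image_vadd, Set.image_image]
  rfl

variable [TopologicalSpace X] [IsTopologicalAddGroup X]

lemma eventually_fK_eq_zero_of_notMem_measSupport (hKbdd : Bornology.IsVonNBounded ℝ K)
    {u : X} (hu : u ∉ measSupport μ) : ∀ᶠ r in 𝓝[>] (0 : ℝ), fK μ K u r = 0 := by
  simp only [measSupport, mem_ofPred_eq, not_forall, not_lt, nonpos_iff_eq_zero] at hu
  obtain ⟨U, hUopen, huU, hU0⟩ := hu
  have hV : (u +ᵥ ·) ⁻¹' U ∈ 𝓝 (0 : X) :=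
    (continuous_const_vadd u).continuousAt.preimage_mem_nhds (by simpa using hUopen.mem_nhds huU)
  have hsmall : ∀ᶠ r in 𝓝 (0 : ℝ), r • K ⊆ (u +ᵥ ·) ⁻¹' U :=
    hKbdd.tendsto_smallSets_nhds.eventually (eventually_smallSets_subset.2 hV)
  filter_upwards [nhdsWithin_le_nhds hsmall] with r hr
  rw [fK_eq_measure_vadd_smul]
  exact measure_mono_null (by rwa [← Set.image_vadd, image_subset_iff]) hU0

/-- Outside the support `fK μ K u r = 0` for small `r`, where the ratio is `⊤` or `0 / 0 = 0`,
never close to `1`. -/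
lemma mem_measSupport_of_isStrongMode (hKbdd : Bornology.IsVonNBounded ℝ K) {u : X}
    (hu : IsStrongMode μ K u) : u ∈ measSupport μ := by
  by_contra hnot
  have hnear : ∀ᶠ r in 𝓝[>] (0 : ℝ), (⨆ z, fK μ K z r) / fK μ K u r ∈ Ioo (1 / 2) 2 :=
    hu (isOpen_Ioo.mem_nhds (by norm_num))
  obtain ⟨r, hr, hzero⟩ :=
    (hnear.and (eventually_fK_eq_zero_of_notMem_measSupport hKbdd hnot)).exists
  rw [hzero] at hr
  by_cases hsup : (⨆ z, fK μ K z r) = 0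
  · simp [hsup] at hr
  · simp [ENNReal.div_zero hsup] at hr

variable [ContinuousSMul ℝ X]

lemma fK_ne_top (hfin : ∀ s : Set X, Bornology.IsVonNBounded ℝ s → μ s ≠ ⊤)
    (hKbdd : Bornology.IsVonNBounded ℝ K) (x : X) (r : ℝ) : fK μ K x r ≠ ⊤ := by
  have hrK : Bornology.IsVonNBounded ℝ (r • K) := by
    simpa using hKbdd.image (r • ContinuousLinearMap.id ℝ X)
  rw [fK_eq_measure_vadd_smul]
  exact hfin _ (hrK.vadd x)

lemma fK_pos_of_mem_measSupport (hKopen : IsOpen K) (hK0 : (0 : X) ∈ K) {u : X}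
    (hu : u ∈ measSupport μ) {r : ℝ} (hr : r ≠ 0) : 0 < fK μ K u r := by
  rw [fK_eq_measure_vadd_smul]
  exact hu _ ((hKopen.smul₀ hr).vadd u) ⟨0, ⟨0, hK0, smul_zero r⟩, add_zero u⟩

lemma one_le_iSup_fK_div_fK (hfin : ∀ s : Set X, Bornology.IsVonNBounded ℝ s → μ s ≠ ⊤)
    (hKopen : IsOpen K) (hK0 : (0 : X) ∈ K) (hKbdd : Bornology.IsVonNBounded ℝ K) {u : X}
    (hu : u ∈ measSupport μ) {r : ℝ} (hr : r ≠ 0) :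
    1 ≤ (⨆ z, fK μ K z r) / fK μ K u r := by
  rw [ENNReal.le_div_iff_mul_le (.inl (fK_pos_of_mem_measSupport hKopen hK0 hu hr).ne')
    (.inl (fK_ne_top hfin hKbdd u r)), one_mul]
  exact le_iSup (fK μ K · r) u

lemma iSup_fK_eq_iSup_fK_sub_of_dense [FirstCountableTopology X] (hKopen : IsOpen K)
    {E : Set X} (hE : Dense E) (u : X) {r : ℝ} (hr : r ≠ 0) :
    ⨆ z, fK μ K z r = ⨆ v ∈ E, fK μ K (u - v) r := by
  refine le_antisymm (iSup_le fun z => ?_) (iSup₂_le fun v _ => le_iSup (fK μ K · r) (u - v))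
  obtain ⟨v, hvE, hv⟩ := mem_closure_iff_seq_limit.mp (hE (u - z))
  have hlim : Tendsto (fun n => u - v n) atTop (𝓝 z) := by
    simpa using (tendsto_const_nhds (x := u)).sub hv
  simp only [fK_eq_measure_vadd_smul]
  calc μ (z +ᵥ r • K) ≤ ⨆ n, μ ((u - v n) +ᵥ r • K) :=
        measure_vadd_le_iSup_of_tendsto (hKopen.smul₀ hr) hlim
    _ ≤ ⨆ w ∈ E, μ ((u - w) +ᵥ r • K) :=
        iSup_le fun n => le_iSup₂ (f := fun w _ => μ ((u - w) +ᵥ r • K)) (v n) (hvE n)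

end Modes

theorem equivalence_Estrong_strong_general
    {X : Type*} [AddCommGroup X] [Module ℝ X] [TopologicalSpace X]
    [IsTopologicalAddGroup X] [ContinuousSMul ℝ X]
    [FirstCountableTopology X] [MeasurableSpace X]
    (μ : Measure X)
    (hfin : ∀ s : Set X, Bornology.IsVonNBounded ℝ s → μ s ≠ ⊤)
    (K : Set X) (hKopen : IsOpen K) (hK0 : (0:X) ∈ K)
    (hKbdd : Bornology.IsVonNBounded ℝ K)
    (E : Set X) (hE : Dense E) (u : X) :
    IsEStrongMode μ K E u ↔ IsStrongMode μ K u := by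
  have hratio : (fun r => (⨆ v ∈ E, fK μ K (u - v) r) / fK μ K u r)
      =ᶠ[𝓝[>] (0 : ℝ)] fun r => (⨆ z, fK μ K z r) / fK μ K u r := by
    filter_upwards [self_mem_nhdsWithin] with r hr
    rw [iSup_fK_eq_iSup_fK_sub_of_dense hKopen hE u (ne_of_gt hr)]
  rw [IsEStrongMode, IsStrongMode, limsup_congr hratio]
  constructor
  · rintro ⟨hu, hlimsup⟩
    have hone : ∀ᶠ r in 𝓝[>] (0 : ℝ), 1 ≤ (⨆ z, fK μ K z r) / fK μ K u r := by
      filter_upwards [self_mem_nhdsWithin] with r hr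
      exact one_le_iSup_fK_div_fK hfin hKopen hK0 hKbdd hu (ne_of_gt hr)
    exact tendsto_of_le_liminf_of_limsup_le (le_liminf_of_le (by isBoundedDefault) hone) hlimsup
  · intro hu
    exact ⟨mem_measSupport_of_isStrongMode hKbdd hu, hu.limsup_eq.le⟩

/-- Theorem 2.5 of Lie–Sullivan. Let `X` be a first countable Hausdorff
real topological vector space, `μ` a nonzero Borel measure on `X` that is finite on
(von Neumann) bounded sets, and `K` a bounded open neighbourhood of the origin. If `E ⊆ X`
is topologically dense, then `u` is an `E`-strong mode iff `u` is a strong mode. -/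
theorem equivalence_Estrong_strong
    {X : Type*} [AddCommGroup X] [Module ℝ X] [TopologicalSpace X]
    [IsTopologicalAddGroup X] [ContinuousSMul ℝ X] [T2Space X]
    [FirstCountableTopology X] [MeasurableSpace X] [BorelSpace X]
    (μ : Measure X) (hμ : μ ≠ 0)
    (hfin : ∀ s : Set X, Bornology.IsVonNBounded ℝ s → μ s ≠ ⊤)
    (K : Set X) (hKopen : IsOpen K) (hK0 : (0:X) ∈ K)
    (hKbdd : Bornology.IsVonNBounded ℝ K)
    (E : Set X) (hE : Dense E) (u : X) :
    IsEStrongMode μ K E u ↔ IsStrongMode μ K u :=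
  equivalence_Estrong_strong_general μ hfin K hKopen hK0 hKbdd E hE u
end

section
/- Let X be a first countable Hausdorff real topological vector space, μ a nonzero Borel measure on X that is finite on bounded sets, and K a bounded open neighbourhood of the origin. Let E ⊆ X be nonempty and u ∈ supp(μ). If the pair (u,E) satisfies the uniformity condition — there exist v* ∈ E and r* ∈ (0,1) such that f(u−v*,r) = sup_{z∈u−E} f(z,r) for all r ∈ (0,r*) — then u is an E-weak mode of μ if and only if u is an E-strong mode of μ. -/
open MeasureTheory Filter Set Topology
open scoped ENNReal NNReal

/-! Each ratio `f(u - v, r) / f(u, r)` with `v ∈ E` is bounded by the supremum ratio, so every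
`E`-strong mode is an `E`-weak mode. Conversely, the uniformity condition makes the supremum
ratio eventually equal to the single ratio at `v*`, whose limsup the weak mode bounds by `1`. -/

section

variable {X : Type*} [AddCommGroup X] [Module ℝ X] [TopologicalSpace X] [MeasurableSpace X]
  {μ : Measure X} {K E : Set X} {u : X}

theorem IsEStrongMode.isEWeakMode (h : IsEStrongMode μ K E u) : IsEWeakMode μ K E u := by
  refine ⟨h.1, fun v hv => le_trans (limsup_le_limsup ?_) h.2⟩
  filter_upwards with r
  exact ENNReal.div_le_div_right (le_biSup _ hv) _

theorem UniformityCondition.isEStrongMode_of_isEWeakMode (hunif : UniformityCondition μ K E u)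
    (h : IsEWeakMode μ K E u) : IsEStrongMode μ K E u := by
  obtain ⟨v, hvE, rs, ⟨hrs0, -⟩, hsup⟩ := hunif
  have hratio : (fun r : ℝ => (⨆ w ∈ E, fK μ K (u - w) r) / fK μ K u r)
      =ᶠ[𝓝[>] (0:ℝ)] fun r => fK μ K (u - v) r / fK μ K u r := by
    filter_upwards [Ioo_mem_nhdsGT hrs0] with r hr
    rw [hsup r hr]
  exact ⟨h.1, (limsup_congr hratio).trans_le (h.2 v hvE)⟩

end

theorem equivalence_Eweak_Estrong_general
    {X : Type*} [AddCommGroup X] [Module ℝ X] [TopologicalSpace X]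
    [MeasurableSpace X]
    (μ : Measure X)
    (K : Set X)
    (E : Set X) (u : X)
    (hunif : UniformityCondition μ K E u) :
    IsEWeakMode μ K E u ↔ IsEStrongMode μ K E u :=
  ⟨hunif.isEStrongMode_of_isEWeakMode, IsEStrongMode.isEWeakMode⟩

/-- Theorem 2.6. If the pair `(u,E)` satisfies the uniformity condition,
then `u` is an `E`-weak mode iff `u` is an `E`-strong mode. -/
theorem equivalence_Eweak_Estrong
    {X : Type*} [AddCommGroup X] [Module ℝ X] [TopologicalSpace X]
    [IsTopologicalAddGroup X] [ContinuousSMul ℝ X] [T2Space X]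
    [FirstCountableTopology X] [MeasurableSpace X] [BorelSpace X]
    (μ : Measure X) (hμ : μ ≠ 0)
    (hfin : ∀ s : Set X, Bornology.IsVonNBounded ℝ s → μ s ≠ ⊤)
    (K : Set X) (hKopen : IsOpen K) (hK0 : (0:X) ∈ K)
    (hKbdd : Bornology.IsVonNBounded ℝ K)
    (E : Set X) (hE : E.Nonempty) (u : X) (hu : u ∈ measSupport μ)
    (hunif : UniformityCondition μ K E u) :
    IsEWeakMode μ K E u ↔ IsEStrongMode μ K E u :=
  equivalence_Eweak_Estrong_general μ K E u hunif
end

section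
/- Let X be a first countable Hausdorff real topological vector space, μ a nonzero Borel measure on X that is finite on bounded sets, and K a bounded open neighbourhood of the origin. If E ⊆ X is topologically dense in X, then for every x ∈ X and every r > 0, sup_{z∈X} f(z,r) = sup_{z∈x−E} f(z,r) (the suprema taken in [0,∞]). -/
open MeasureTheory Filter Set Topology
open scoped ENNReal NNReal

open scoped Pointwise

/-! For an open `U`, the mass `μ (g +ᵥ U)` is lower semicontinuous in `g`: by first countability
`U` is an increasing countable union of sets `s n` that stay inside `U` under all small
translations, so `μ (g +ᵥ U)` is approximated from below by `μ (g +ᵥ s n)`, a lower bound for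
`μ (g' +ᵥ U)` for all `g'` near `g`. A lower semicontinuous function has the same supremum over
a dense set as over the whole space, and `z ↦ f(z, r)` is of this form with `U = r • K`. -/

theorem Dense.biSup_eq_iSup_of_lowerSemicontinuous {α β : Type*} [TopologicalSpace α]
    [CompleteLinearOrder β] {f : α → β} {D : Set α} (hD : Dense D)
    (hf : LowerSemicontinuous f) : ⨆ x ∈ D, f x = ⨆ x, f x := by
  refine le_antisymm (iSup₂_le fun x _ => le_iSup f x) (iSup_le fun x => le_of_forall_lt ?_)
  intro y hy
  obtain ⟨z, hyz, hzD⟩ := hD.inter_open_nonempty _ (hf.isOpen_preimage y) ⟨x, hy⟩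
  exact hyz.trans_le (le_iSup₂ (f := fun z _ => f z) z hzD)

section TopologicalAddGroup

variable {G : Type*} [AddGroup G] [TopologicalSpace G] [FirstCountableTopology G]

theorem IsOpen.exists_monotone_iUnion_eq_eventually_vadd_subset [ContinuousAdd G] {U : Set G}
    (hU : IsOpen U) :
    ∃ s : ℕ → Set G, Monotone s ∧ ⋃ n, s n = U ∧ ∀ n, ∀ᶠ ξ in 𝓝 (0 : G), ξ +ᵥ s n ⊆ U := by
  obtain ⟨b, hb⟩ := (𝓝 (0 : G)).exists_antitone_basis
  refine ⟨fun n => {u | ∀ ξ ∈ b n, ξ + u ∈ U}, fun m n hmn u hu ξ hξ => hu ξ (hb.antitone hmn hξ),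
    ?_, fun n => ?_⟩
  · ext u
    refine ⟨fun hu => ?_, fun hu => ?_⟩
    · obtain ⟨n, hn⟩ := mem_iUnion.mp hu
      simpa using hn 0 (mem_of_mem_nhds (hb.mem n))
    · have hnhds : {ξ : G | ξ + u ∈ U} ∈ 𝓝 0 :=
        (continuous_add_const u).continuousAt.preimage_mem_nhds
          (hU.mem_nhds (by simpa using hu))
      obtain ⟨n, hn⟩ := hb.mem_iff.mp hnhds
      exact mem_iUnion.mpr ⟨n, fun ξ hξ => hn hξ⟩
  · filter_upwards [hb.mem n] with ξ hξ
    rintro _ ⟨u, hu, rfl⟩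
    exact hu ξ hξ

theorem IsOpen.lowerSemicontinuous_measure_vadd [IsTopologicalAddGroup G] [MeasurableSpace G]
    (μ : Measure G) {U : Set G} (hU : IsOpen U) : LowerSemicontinuous fun g : G => μ (g +ᵥ U) := by
  intro g y (hy : y < μ (g +ᵥ U))
  obtain ⟨s, hs_mono, hs_union, hs_small⟩ := hU.exists_monotone_iUnion_eq_eventually_vadd_subset
  have hsup : μ (g +ᵥ U) = ⨆ n, μ (g +ᵥ s n) := by
    rw [← hs_union, vadd_set_iUnion]
    exact Monotone.measure_iUnion fun m n hmn => vadd_set_mono (hs_mono hmn)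
  obtain ⟨n, hn⟩ := lt_iSup_iff.mp (hsup ▸ hy)
  have hshift : Tendsto (fun g' => -g' + g) (𝓝 g) (𝓝 0) :=
    Continuous.tendsto' (f := fun g' : G => -g' + g) (by fun_prop) g 0 (by simp)
  filter_upwards [hshift.eventually (hs_small n)] with g' hg'
  refine hn.trans_le (measure_mono ?_)
  rintro _ ⟨u, hu, rfl⟩
  exact ⟨-g' + g + u, hg' ⟨u, hu, rfl⟩, by simp [← add_assoc]⟩

end TopologicalAddGroup

theorem fK_eq_measure_vadd_smul_set {X : Type*} [AddCommGroup X] [Module ℝ X]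
    [MeasurableSpace X] (μ : Measure X) (K : Set X) (z : X) (r : ℝ) :
    fK μ K z r = μ (z +ᵥ r • K) := by
  rw [fK, ← image_smul, ← image_vadd, image_image]
  rfl

theorem iSup_eq_biSup_of_dense_general
    {X : Type*} [AddCommGroup X] [Module ℝ X] [TopologicalSpace X]
    [IsTopologicalAddGroup X] [ContinuousSMul ℝ X]
    [FirstCountableTopology X] [MeasurableSpace X]
    (μ : Measure X)
    (K : Set X) (hKopen : IsOpen K)
    (E : Set X) (hE : Dense E) (x : X) (r : ℝ) (hr : 0 < r) :
    (⨆ z : X, fK μ K z r) = ⨆ v ∈ E, fK μ K (x - v) r := by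
  have hlsc : LowerSemicontinuous fun z => fK μ K z r := by
    simpa only [fK_eq_measure_vadd_smul_set] using
      IsOpen.lowerSemicontinuous_measure_vadd μ (hKopen.smul₀ hr.ne')
  have hlsc_sub : LowerSemicontinuous fun v => fK μ K (x - v) r :=
    hlsc.comp (continuous_const.sub continuous_id)
  rw [hE.biSup_eq_iSup_of_lowerSemicontinuous hlsc_sub]
  exact ((Equiv.subLeft x).iSup_comp (g := fun z => fK μ K z r)).symm

/-- Proposition 3.4. If `E` is topologically dense in `X`, then for
every `x ∈ X` and `r > 0`, `sup_{z ∈ X} f(z,r) = sup_{z ∈ x − E} f(z,r)`. -/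
theorem iSup_eq_biSup_of_dense
    {X : Type*} [AddCommGroup X] [Module ℝ X] [TopologicalSpace X]
    [IsTopologicalAddGroup X] [ContinuousSMul ℝ X] [T2Space X]
    [FirstCountableTopology X] [MeasurableSpace X] [BorelSpace X]
    (μ : Measure X) (hμ : μ ≠ 0)
    (hfin : ∀ s : Set X, Bornology.IsVonNBounded ℝ s → μ s ≠ ⊤)
    (K : Set X) (hKopen : IsOpen K) (hK0 : (0:X) ∈ K)
    (hKbdd : Bornology.IsVonNBounded ℝ K)
    (E : Set X) (hE : Dense E) (x : X) (r : ℝ) (hr : 0 < r) :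
    (⨆ z : X, fK μ K z r) = ⨆ v ∈ E, fK μ K (x - v) r :=
  iSup_eq_biSup_of_dense_general μ K hKopen E hE x r hr
end

section
/- Let X = ℝⁿ, let E be a topologically dense proper subset of X, let K be the open unit ℓ_p-ball centred at the origin for some 0 < p ≤ ∞, and let μ be a Borel measure on X that admits a continuous density g with respect to Lebesgue measure. If u is an E-weak mode of μ and g(u) > 0, then u is a strong mode of μ. -/
open MeasureTheory Filter Set Topology
open scoped ENNReal NNReal

/-- The open unit ℓ_p-ball in `ℝⁿ` centred at the origin, `0 < p ≤ ∞`. -/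
noncomputable def lpUnitBall (n : ℕ) (p : ℝ≥0∞) : Set (Fin n → ℝ) :=
  if p = ⊤ then {x | ∀ i, |x i| < 1} else {x | (∑ i, |x i| ^ p.toReal) < 1}

/-!
For a continuous density `ρ` and a bounded set `K` of positive Haar measure, `f(x, r)` divided by
the Haar measure of `x + r • K` tends to `ρ x` as `r ↓ 0`. So the ratio `f(u - v, r) / f(u, r)`
tends to `ρ (u - v) / ρ u`, and being an `E`-weak mode forces `ρ (u - v) ≤ ρ u` for `v ∈ E`;
by density of `E` and continuity, `u` maximises `ρ`. Then `sup_z f(z, r) ≤ ρ u * |r • K|`, which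
squeezes `sup_z f(z, r) / f(u, r)` to `1`.
-/

open Pointwise Bornology

lemma ENNReal.tendsto_div_of_tendsto_div_div {α : Type*} {l : Filter α} {f h D : α → ℝ≥0∞}
    {a b : ℝ≥0∞} (hf : Tendsto (fun r => f r / D r) l (𝓝 a))
    (hh : Tendsto (fun r => h r / D r) l (𝓝 b)) (hD : ∀ᶠ r in l, D r ≠ 0 ∧ D r ≠ ∞)
    (hb : b ≠ 0) (ha : a ≠ ∞) : Tendsto (fun r => f r / h r) l (𝓝 (a / b)) := by
  refine (ENNReal.Tendsto.div hf (Or.inr hb) hh (Or.inr ha)).congr' ?_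
  filter_upwards [hD] with r ⟨hD0, hDtop⟩
  rw [div_eq_mul_inv (f r), div_eq_mul_inv (h r),
    ENNReal.mul_div_mul_right _ _ (ENNReal.inv_ne_zero.2 hDtop) (ENNReal.inv_ne_top.2 hD0)]

lemma image_add_smul_eq_vadd_smul {X : Type*} [AddCommGroup X] [Module ℝ X] (K : Set X) (x : X)
    (r : ℝ) : (fun y => x + r • y) '' K = x +ᵥ r • K := by
  rw [← Set.image_smul, ← Set.image_vadd, Set.image_image]
  rfl

lemma fK_withDensity {X : Type*} [AddCommGroup X] [Module ℝ X] [MeasurableSpace X]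
    (ν : Measure X) [SFinite ν] (ρ : X → ℝ≥0∞) (K : Set X) (x : X) (r : ℝ) :
    fK (ν.withDensity ρ) K x r = ∫⁻ y in (fun y => x + r • y) '' K, ρ y ∂ν :=
  withDensity_apply' ρ _

lemma fK_withDensity_le {X : Type*} [AddCommGroup X] [Module ℝ X] [MeasurableSpace X]
    {ν : Measure X} [SFinite ν] {ρ : X → ℝ≥0∞} {M : ℝ≥0∞} (hρM : ∀ y, ρ y ≤ M) (K : Set X)
    (x : X) (r : ℝ) : fK (ν.withDensity ρ) K x r ≤ M * fK ν K x r := by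
  rw [fK_withDensity, fK, ← setLIntegral_const]
  exact lintegral_mono hρM

lemma tendsto_image_add_smul_smallSets {X : Type*} [NormedAddCommGroup X] [NormedSpace ℝ X]
    {K : Set X} (hK : IsBounded K) (x : X) :
    Tendsto (fun r : ℝ => (fun y => x + r • y) '' K) (𝓝 0) (𝓝 x).smallSets := by
  have hx : Tendsto (x + ·) (𝓝 (0 : X)) (𝓝 x) := by
    simpa using (continuous_const_add x).tendsto 0
  simp only [image_add_smul_eq_vadd_smul]
  exact hx.image_smallSets.comp ((NormedSpace.isVonNBounded_iff ℝ).2 hK).tendsto_smallSets_nhds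

section HaarMeasure

variable {X : Type*} [NormedAddCommGroup X] [NormedSpace ℝ X] [FiniteDimensional ℝ X]
  [MeasurableSpace X] [BorelSpace X] {ν : Measure X} [ν.IsAddHaarMeasure] {K : Set X}

variable (ν) in
lemma fK_addHaar (K : Set X) (x : X) (r : ℝ) :
    fK ν K x r = ENNReal.ofReal |r ^ Module.finrank ℝ X| * ν K := by
  rw [fK, image_add_smul_eq_vadd_smul, measure_vadd, Measure.addHaar_smul]

variable (ν) in
lemma fK_addHaar_eq (K : Set X) (x y : X) (r : ℝ) : fK ν K x r = fK ν K y r := by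
  simp only [fK_addHaar]

lemma eventually_fK_addHaar_ne_zero_and_ne_top (hK : IsBounded K) (hK0 : 0 < ν K) (x : X) :
    ∀ᶠ r in 𝓝[>] (0 : ℝ), fK ν K x r ≠ 0 ∧ fK ν K x r ≠ ∞ := by
  filter_upwards [self_mem_nhdsWithin] with r (hr : 0 < r)
  rw [fK_addHaar]
  exact ⟨mul_ne_zero (by simp [hr.ne']) hK0.ne',
    ENNReal.mul_ne_top ENNReal.ofReal_ne_top hK.measure_lt_top.ne⟩

lemma tendsto_fK_withDensity_div_fK (hK : IsBounded K) (hK0 : 0 < ν K) {ρ : X → ℝ≥0∞}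
    (hρ : Measurable ρ) {x : X} (hρx : ContinuousAt ρ x) (hρx_top : ρ x ≠ ∞) :
    Tendsto (fun r => fK (ν.withDensity ρ) K x r / fK ν K x r) (𝓝[>] 0) (𝓝 (ρ x)) := by
  rw [ENNReal.tendsto_nhds hρx_top]
  intro ε hε
  have hnear : ∀ᶠ r in 𝓝[>] (0 : ℝ),
      ∀ y ∈ (fun y => x + r • y) '' K, ρ y ∈ Icc (ρ x - ε) (ρ x + ε) :=
    nhdsWithin_le_nhds <| tendsto_smallSets_iff.1 (tendsto_image_add_smul_smallSets hK x) _
      ((ENNReal.tendsto_nhds hρx_top).1 hρx ε hε)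
  filter_upwards [hnear, eventually_fK_addHaar_ne_zero_and_ne_top hK hK0 x]
    with r hr ⟨hS0, hStop⟩
  rw [fK_withDensity]
  have hlow : (ρ x - ε) * fK ν K x r ≤ ∫⁻ y in (fun y => x + r • y) '' K, ρ y ∂ν := by
    rw [fK, ← setLIntegral_const]
    exact setLIntegral_mono hρ fun y hy => (hr y hy).1
  have hup : ∫⁻ y in (fun y => x + r • y) '' K, ρ y ∂ν ≤ (ρ x + ε) * fK ν K x r := by
    rw [fK, ← setLIntegral_const]
    exact setLIntegral_mono measurable_const fun y hy => (hr y hy).2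
  exact ⟨(ENNReal.le_div_iff_mul_le (Or.inl hS0) (Or.inl hStop)).2 hlow,
    (ENNReal.div_le_iff hS0 hStop).2 hup⟩

lemma tendsto_fK_withDensity_div_fK_withDensity (hK : IsBounded K) (hK0 : 0 < ν K)
    {ρ : X → ℝ≥0∞} (hρ : Measurable ρ) {x y : X} (hρx : ContinuousAt ρ x)
    (hρy : ContinuousAt ρ y) (hρx_top : ρ x ≠ ∞) (hρy_top : ρ y ≠ ∞) (hρy0 : ρ y ≠ 0) :
    Tendsto (fun r => fK (ν.withDensity ρ) K x r / fK (ν.withDensity ρ) K y r) (𝓝[>] 0)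
      (𝓝 (ρ x / ρ y)) := by
  refine ENNReal.tendsto_div_of_tendsto_div_div
    (tendsto_fK_withDensity_div_fK hK hK0 hρ hρx hρx_top) ?_
    (eventually_fK_addHaar_ne_zero_and_ne_top hK hK0 x) hρy0 hρx_top
  simpa only [fK_addHaar_eq ν K y x] using tendsto_fK_withDensity_div_fK hK hK0 hρ hρy hρy_top

lemma IsEWeakMode.density_le (hK : IsBounded K) (hK0 : 0 < ν K) {ρ : X → ℝ≥0∞}
    (hρ : Continuous ρ) (hρ_top : ∀ x, ρ x ≠ ∞) {E : Set X} (hE : Dense E) {u : X}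
    (hu : IsEWeakMode (ν.withDensity ρ) K E u) (hρu0 : ρ u ≠ 0) (x : X) : ρ x ≤ ρ u := by
  have hE_le : ∀ v ∈ E, ρ (u - v) ≤ ρ u := by
    intro v hv
    have hratio := tendsto_fK_withDensity_div_fK_withDensity hK hK0 hρ.measurable
      hρ.continuousAt hρ.continuousAt (hρ_top (u - v)) (hρ_top u) hρu0
    have hle := hu.2 v hv
    rwa [hratio.limsup_eq, ENNReal.div_le_iff hρu0 (hρ_top u), one_mul] at hle
  simpa using hE.induction (P := fun v => ρ (u - v) ≤ ρ u) hE_le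
    (isClosed_le (hρ.comp (continuous_sub_left u)) continuous_const) (u - x)

lemma isStrongMode_withDensity_of_forall_le (hK : IsBounded K) (hK0 : 0 < ν K)
    {ρ : X → ℝ≥0∞} (hρ : Measurable ρ) {u : X} (hρu : ContinuousAt ρ u)
    (hmax : ∀ x, ρ x ≤ ρ u) (hρu0 : ρ u ≠ 0) (hρu_top : ρ u ≠ ∞) :
    IsStrongMode (ν.withDensity ρ) K u := by
  have hu := tendsto_fK_withDensity_div_fK hK hK0 hρ hρu hρu_top
  have hsup : Tendsto (fun r => (⨆ z, fK (ν.withDensity ρ) K z r) / fK ν K u r) (𝓝[>] 0)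
      (𝓝 (ρ u)) := by
    refine tendsto_of_tendsto_of_tendsto_of_le_of_le hu tendsto_const_nhds (fun r => ?_)
      (fun r => ENNReal.div_le_of_le_mul (iSup_le fun z => ?_))
    · exact ENNReal.div_le_div_right (le_iSup (fun z => fK (ν.withDensity ρ) K z r) u) _
    · exact (fK_withDensity_le hmax K z r).trans_eq (by rw [fK_addHaar_eq ν K z u])
  have hstrong := ENNReal.tendsto_div_of_tendsto_div_div hsup hu
    (eventually_fK_addHaar_ne_zero_and_ne_top hK hK0 u) hρu0 hρu_top
  rwa [ENNReal.div_self hρu0 hρu_top] at hstrong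

end HaarMeasure

section LpUnitBall

variable {n : ℕ} {p : ℝ≥0∞}

lemma isOpen_lpUnitBall : IsOpen (lpUnitBall n p) := by
  unfold lpUnitBall
  split_ifs
  · simp only [ofPred_forall]
    exact isOpen_iInter_of_finite fun i => isOpen_lt (continuous_apply i).abs continuous_const
  · exact isOpen_lt (continuous_finsetSum _ fun i _ =>
      (continuous_apply i).abs.rpow_const fun _ => Or.inr ENNReal.toReal_nonneg) continuous_const

lemma zero_mem_lpUnitBall (hp : 0 < p) : (0 : Fin n → ℝ) ∈ lpUnitBall n p := by
  unfold lpUnitBall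
  split_ifs with h
  · simp
  · simp [Real.zero_rpow (ENNReal.toReal_pos hp.ne' h).ne']

lemma lpUnitBall_subset_ball : lpUnitBall n p ⊆ Metric.ball 0 1 := by
  intro x hx
  rw [mem_ball_zero_iff, pi_norm_lt_iff one_pos]
  intro i
  rw [Real.norm_eq_abs]
  unfold lpUnitBall at hx
  split_ifs at hx
  · exact hx i
  · by_contra! hge
    have hsum : |x i| ^ p.toReal ≤ ∑ j, |x j| ^ p.toReal :=
      Finset.single_le_sum (fun j _ => Real.rpow_nonneg (abs_nonneg _) _) (Finset.mem_univ i)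
    linarith [Real.one_le_rpow hge (ENNReal.toReal_nonneg (a := p)), hx.out]

lemma isBounded_lpUnitBall : IsBounded (lpUnitBall n p) :=
  Metric.isBounded_ball.subset lpUnitBall_subset_ball

lemma volume_lpUnitBall_pos (hp : 0 < p) : 0 < volume (lpUnitBall n p) :=
  isOpen_lpUnitBall.measure_pos volume ⟨0, zero_mem_lpUnitBall hp⟩

end LpUnitBall

theorem strong_of_Eweak_finite_dim_general
    {n : ℕ} (p : ℝ≥0∞) (hp : 0 < p)
    (g : (Fin n → ℝ) → ℝ) (hg : Continuous g)
    (μ : Measure (Fin n → ℝ))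
    (hμ : μ = volume.withDensity (fun x => ENNReal.ofReal (g x)))
    (E : Set (Fin n → ℝ)) (hE : Dense E)
    (u : Fin n → ℝ) (hu : IsEWeakMode μ (lpUnitBall n p) E u) (hgu : 0 < g u) :
    IsStrongMode μ (lpUnitBall n p) u := by
  subst hμ
  have hρ : Continuous fun x => ENNReal.ofReal (g x) := ENNReal.continuous_ofReal.comp hg
  have hρu0 : ENNReal.ofReal (g u) ≠ 0 := (ENNReal.ofReal_pos.2 hgu).ne'
  have hK : IsBounded (lpUnitBall n p) := isBounded_lpUnitBall
  have hK0 := volume_lpUnitBall_pos (n := n) hp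
  exact isStrongMode_withDensity_of_forall_le hK hK0 hρ.measurable hρ.continuousAt
    (hu.density_le hK hK0 hρ (fun _ => ENNReal.ofReal_ne_top) hE hρu0) hρu0 ENNReal.ofReal_ne_top

/-- Proposition 4.1. Let `X = ℝⁿ`, let `E` be a topologically dense
proper subset of `X`, let `K` be the open unit ℓ_p-ball for some `0 < p ≤ ∞`, and let `μ`
admit a continuous density `g` w.r.t. Lebesgue measure. If `u` is an `E`-weak mode of `μ`
and `g(u) > 0`, then `u` is a strong mode of `μ`. -/
theorem strong_of_Eweak_finite_dim
    {n : ℕ} (p : ℝ≥0∞) (hp : 0 < p)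
    (g : (Fin n → ℝ) → ℝ) (hg : Continuous g) (hg0 : ∀ x, 0 ≤ g x)
    (μ : Measure (Fin n → ℝ))
    (hμ : μ = volume.withDensity (fun x => ENNReal.ofReal (g x)))
    (E : Set (Fin n → ℝ)) (hE : Dense E) (hEproper : E ≠ univ)
    (u : Fin n → ℝ) (hu : IsEWeakMode μ (lpUnitBall n p) E u) (hgu : 0 < g u) :
    IsStrongMode μ (lpUnitBall n p) u :=
  strong_of_Eweak_finite_dim_general p hp g hg μ hμ E hE u hu hgu
end

section
/- There exists a finite nonzero Borel measure μ on ℝ² and a point u ∈ supp(μ) such that, taking K to be the open unit ℓ∞-ball and E = ℚ² (which is topologically dense in ℝ²), u is an E-weak mode of μ but u is not an E-strong mode of μ; in particular, μ admits E-weak modes but no strong mode. -/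
open MeasureTheory Filter Set Topology
open scoped ENNReal NNReal

/-!
Take a closed set `A ⊆ [0,1]` of irrationals of positive measure and a Lebesgue density point `a`
of it. The measure `ν` on `ℝ` is Lebesgue measure on `[-1,1]` plus, for each `m`, `2ᵐ` times
Lebesgue measure on the translate by `m + 2` of `A ∩ [a - 4⁻ᵐ, a + 4⁻ᵐ]`; `μ` is `ν` placed on the
horizontal axis. The pieces form a locally finite family of closed sets of irrationals, so near each
rational point `ν` is at most Lebesgue measure, and `0` is a `ℚ²`-weak mode. Near the translates of
`a`, however, `ν` has density of order `2ᵐ`, and rational points approximating them show that `0`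
is not a `ℚ²`-strong mode. As the density of `ν` is locally bounded but globally unbounded, no
point is a strong mode.
-/

open Metric
open scoped Pointwise

theorem limsup_div_le_one_of_eventually_le {α : Type*} {l : Filter α} {f g : α → ℝ≥0∞}
    (h : ∀ᶠ x in l, f x ≤ g x) : limsup (fun x => f x / g x) l ≤ 1 :=
  limsup_le_of_le (by isBoundedDefault) <|
    h.mono fun _ hx => ENNReal.div_le_of_le_mul (by rwa [one_mul])

theorem mem_measSupport_of_eventually_pos {X : Type*} [PseudoMetricSpace X] [MeasurableSpace X]
    {μ : Measure X} {x : X} (h : ∀ᶠ r in 𝓝[>] 0, 0 < μ (ball x r)) : x ∈ measSupport μ := by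
  intro U hU hxU
  obtain ⟨ε, hε, hεU⟩ := Metric.isOpen_iff.mp hU x hxU
  obtain ⟨r, hr, hrε⟩ := (h.and (Ioo_mem_nhdsGT hε)).exists
  exact hr.trans_le (measure_mono ((ball_subset_ball hrε.2.le).trans hεU))

theorem ne_zero_of_mem_measSupport {X : Type*} [TopologicalSpace X] [MeasurableSpace X]
    {μ : Measure X} {x : X} (hx : x ∈ measSupport μ) : μ ≠ 0 := by
  rintro rfl
  simpa using hx univ isOpen_univ (mem_univ x)

theorem fK_ball_zero_one {E : Type*} [NormedAddCommGroup E] [NormedSpace ℝ E] [MeasurableSpace E]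
    (μ : Measure E) (x : E) {r : ℝ} (hr : 0 < r) : fK μ (ball 0 1) x r = μ (ball x r) := by
  rw [fK, show (fun y : E => x + r • y) = (x +ᵥ ·) ∘ (r • ·) from rfl, image_comp, image_smul,
    image_vadd, affinity_unitBall hr x]

def rationalPoints (ι : Type*) : Set (ι → ℝ) := {x | ∀ i, ∃ q : ℚ, x i = q}

theorem dense_rationalPoints (ι : Type*) : Dense (rationalPoints ι) := by
  have : rationalPoints ι = univ.pi fun _ => range ((↑) : ℚ → ℝ) := by
    ext x
    simp [rationalPoints, eq_comm]
  rw [this]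
  exact dense_pi univ fun _ _ => Rat.denseRange_cast

theorem exists_isClosed_subset_Icc_irrational :
    ∃ A : Set ℝ, IsClosed A ∧ A ⊆ Icc 0 1 ∧ volume A ≠ 0 ∧ ∀ x ∈ A, Irrational x := by
  obtain ⟨U, hQU, hU, hUvol⟩ := (range ((↑) : ℚ → ℝ)).exists_isOpen_lt_of_lt 1
    (by rw [(countable_range _).measure_zero volume]; exact one_pos)
  refine ⟨Icc 0 1 \ U, isClosed_Icc.sdiff hU, sdiff_subset, fun h => ?_,
    fun x hx hxQ => hx.2 (hQU hxQ)⟩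
  have := le_measure_sdiff (μ := volume) (s₁ := Icc (0 : ℝ) 1) (s₂ := U)
  rw [h, nonpos_iff_eq_zero, tsub_eq_zero_iff_le, Real.volume_Icc, sub_zero,
    ENNReal.ofReal_one] at this
  exact (this.trans_lt hUvol).false

theorem exists_measure_ball_le_two_mul_measure_ball_inter {E : Type*} [NormedAddCommGroup E]
    [NormedSpace ℝ E] [FiniteDimensional ℝ E] [MeasurableSpace E] [BorelSpace E] [Nontrivial E]
    (μ : Measure E) [μ.IsAddHaarMeasure] {A : Set E} (hA : μ A ≠ 0) :
    ∃ a, ∀ᶠ r in 𝓝[>] 0, μ (ball a r) ≤ 2 * μ (ball a r ∩ A) := by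
  have : (ae (μ.restrict A)).NeBot := ae_neBot.2 (by rwa [Ne, Measure.restrict_eq_zero])
  obtain ⟨a, ha⟩ := (Besicovitch.ae_tendsto_measure_inter_div μ A).exists
  refine ⟨a, ?_⟩
  filter_upwards [ha.eventually (lt_mem_nhds (by norm_num : (2⁻¹ : ℝ≥0∞) < 1)),
    self_mem_nhdsWithin] with r hr (hr0 : 0 < r)
  have hsphere : μ (A ∩ closedBall a r) ≤ μ (ball a r ∩ A) :=
    calc μ (A ∩ closedBall a r) ≤ μ (ball a r ∩ A ∪ sphere a r) :=
          measure_mono fun x ⟨hxA, hx⟩ => by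
            rw [← ball_union_sphere] at hx
            exact hx.imp (fun hx => ⟨hx, hxA⟩) id
      _ ≤ μ (ball a r ∩ A) :=
          (measure_union_le _ _).trans (by rw [Measure.addHaar_sphere, add_zero])
  rw [Measure.addHaar_closedBall_eq_addHaar_ball,
    ENNReal.lt_div_iff_mul_lt (Or.inl (measure_ball_pos μ a hr0).ne')
      (Or.inl measure_ball_lt_top.ne)] at hr
  calc μ (ball a r) = 2 * (2⁻¹ * μ (ball a r)) := by
        rw [← mul_assoc, ENNReal.mul_inv_cancel two_ne_zero ENNReal.ofNat_ne_top, one_mul]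
    _ ≤ 2 * μ (ball a r ∩ A) := by gcongr; exact hr.le.trans hsphere

noncomputable def axisMeasure (ν : Measure ℝ) : Measure (Fin 2 → ℝ) := ν.map fun t => ![t, 0]

instance (ν : Measure ℝ) [IsFiniteMeasure ν] : IsFiniteMeasure (axisMeasure ν) :=
  Measure.isFiniteMeasure_map ν _

theorem fK_axisMeasure (ν : Measure ℝ) (y : Fin 2 → ℝ) {r : ℝ} (hr : 0 < r) :
    fK (axisMeasure ν) (ball 0 1) y r = if |y 1| < r then ν (ball (y 0) r) else 0 := by
  rw [fK_ball_zero_one _ _ hr, axisMeasure, Measure.map_apply (by fun_prop) measurableSet_ball]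
  split_ifs with h
  · congr 1
    ext t
    simp [dist_pi_lt_iff hr, Fin.forall_fin_two, Real.dist_eq, abs_sub_comm, h]
  · convert measure_empty (μ := ν)
    ext t
    simp [dist_pi_lt_iff hr, Fin.forall_fin_two, Real.dist_eq, abs_sub_comm, h]

theorem fK_axisMeasure_le (ν : Measure ℝ) (y : Fin 2 → ℝ) {r : ℝ} (hr : 0 < r) :
    fK (axisMeasure ν) (ball 0 1) y r ≤ ν (ball (y 0) r) := by
  rw [fK_axisMeasure ν y hr]
  split_ifs <;> simp

theorem fK_axisMeasure_of_snd_eq_zero (ν : Measure ℝ) {y : Fin 2 → ℝ} (hy : y 1 = 0) {r : ℝ}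
    (hr : 0 < r) : fK (axisMeasure ν) (ball 0 1) y r = ν (ball (y 0) r) := by
  rw [fK_axisMeasure ν y hr, if_pos (by rwa [hy, abs_zero])]

section AxisModes

variable {ν : Measure ℝ}

theorem zero_mem_measSupport_axisMeasure
    (h0 : ∀ᶠ r in 𝓝[>] 0, ν (ball 0 r) = volume (ball (0 : ℝ) r)) :
    (0 : Fin 2 → ℝ) ∈ measSupport (axisMeasure ν) := by
  apply mem_measSupport_of_eventually_pos
  filter_upwards [h0, self_mem_nhdsWithin] with r h (hr : 0 < r)
  rw [← fK_ball_zero_one _ _ hr, fK_axisMeasure_of_snd_eq_zero ν rfl hr]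
  simpa [h] using hr

theorem isEWeakMode_axisMeasure
    (h0 : ∀ᶠ r in 𝓝[>] 0, ν (ball 0 r) = volume (ball (0 : ℝ) r))
    (hq : ∀ q : ℚ, ∀ᶠ r in 𝓝[>] 0, ν (ball (q : ℝ) r) ≤ volume (ball (q : ℝ) r)) :
    IsEWeakMode (axisMeasure ν) (ball 0 1) (rationalPoints (Fin 2)) 0 := by
  refine ⟨zero_mem_measSupport_axisMeasure h0, fun v hv => ?_⟩
  obtain ⟨q, hvq⟩ := hv 0
  apply limsup_div_le_one_of_eventually_le
  filter_upwards [hq (-q), h0, self_mem_nhdsWithin] with r hqr h0r (hr : 0 < r)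
  calc fK (axisMeasure ν) (ball 0 1) (0 - v) r ≤ ν (ball ((0 - v) 0) r) :=
        fK_axisMeasure_le ν _ hr
    _ ≤ volume (ball (0 : ℝ) r) := by simpa [hvq, Real.volume_ball] using hqr
    _ = fK (axisMeasure ν) (ball 0 1) 0 r := by
        rw [fK_axisMeasure_of_snd_eq_zero ν rfl hr, Pi.zero_apply, h0r]

theorem not_isEStrongMode_axisMeasure
    (h0 : ∀ᶠ r in 𝓝[>] 0, ν (ball 0 r) = volume (ball (0 : ℝ) r))
    (hunb : ∀ C : ℝ≥0, ∃ x, ∀ᶠ r in 𝓝[>] 0, C * volume (ball x r) ≤ ν (ball x r)) :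
    ¬ IsEStrongMode (axisMeasure ν) (ball 0 1) (rationalPoints (Fin 2)) 0 := by
  rintro ⟨-, hle⟩
  obtain ⟨z, hz⟩ := hunb 4
  have hratio : ∀ᶠ r in 𝓝[>] 0, (2 : ℝ≥0∞) ≤
      (⨆ v ∈ rationalPoints (Fin 2), fK (axisMeasure ν) (ball 0 1) (0 - v) r) /
        fK (axisMeasure ν) (ball 0 1) 0 r := by
    filter_upwards [h0, eventually_nhdsGT_zero_mul_left (by norm_num : (0 : ℝ) < 2⁻¹) hz,
      self_mem_nhdsWithin] with r h0r hzr (hr : 0 < r)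
    obtain ⟨p, hp⟩ := exists_rat_near z (by positivity : 0 < 2⁻¹ * r)
    have hv : ![-(p : ℝ), 0] ∈ rationalPoints (Fin 2) :=
      Fin.forall_fin_two.2 ⟨⟨-p, by simp⟩, ⟨0, by simp⟩⟩
    rw [fK_axisMeasure_of_snd_eq_zero ν rfl hr, Pi.zero_apply, h0r,
      ENNReal.le_div_iff_mul_le (Or.inl (measure_ball_pos _ _ hr).ne')
        (Or.inl measure_ball_lt_top.ne)]
    calc 2 * volume (ball (0 : ℝ) r) = (4 : ℝ≥0) * volume (ball z (2⁻¹ * r)) := by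
          rw [Real.volume_ball, Real.volume_ball, show 2 * (2⁻¹ * r) = r by ring,
            ENNReal.ofReal_mul zero_le_two, ENNReal.ofReal_ofNat]
          push_cast
          ring
      _ ≤ ν (ball z (2⁻¹ * r)) := hzr
      _ ≤ ν (ball (p : ℝ) r) := measure_mono <| ball_subset_ball' <| by
          rw [Real.dist_eq]
          linarith
      _ = fK (axisMeasure ν) (ball 0 1) (0 - ![-(p : ℝ), 0]) r := by
          rw [fK_axisMeasure_of_snd_eq_zero ν (by simp) hr]
          simp
      _ ≤ _ := le_biSup (fun v => fK (axisMeasure ν) (ball 0 1) (0 - v) r) hv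
  have := (le_limsup_of_frequently_le hratio.frequently).trans hle
  norm_num at this

theorem not_isStrongMode_axisMeasure [IsFiniteMeasure ν]
    (hloc : ∀ x, ∃ C : ℝ≥0, ∀ᶠ r in 𝓝[>] 0, ν (ball x r) ≤ C * volume (ball x r))
    (hunb : ∀ C : ℝ≥0, ∃ x, ∀ᶠ r in 𝓝[>] 0, C * volume (ball x r) ≤ ν (ball x r))
    (w : Fin 2 → ℝ) : ¬ IsStrongMode (axisMeasure ν) (ball 0 1) w := by
  intro hw
  obtain ⟨C, hC⟩ := hloc (w 0)
  obtain ⟨z, hz⟩ := hunb (2 * C + 1)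
  have hratio : ∀ᶠ r in 𝓝[>] 0, (2 : ℝ≥0∞) ≤
      (⨆ y, fK (axisMeasure ν) (ball 0 1) y r) / fK (axisMeasure ν) (ball 0 1) w r := by
    filter_upwards [hC, hz, self_mem_nhdsWithin] with r hCr hzr (hr : 0 < r)
    have hsup : ν (ball z r) ≤ ⨆ y, fK (axisMeasure ν) (ball 0 1) y r :=
      (fK_axisMeasure_of_snd_eq_zero ν (y := ![z, 0]) rfl hr).symm.trans_le
        (le_iSup (fun y => fK (axisMeasure ν) (ball 0 1) y r) _)
    have hvol : volume (ball (w 0) r) = volume (ball z r) := by simp [Real.volume_ball]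
    have hpos : 0 < ((2 * C + 1 : ℝ≥0) : ℝ≥0∞) * volume (ball z r) :=
      ENNReal.mul_pos (by simp) (measure_ball_pos _ _ hr).ne'
    rw [ENNReal.le_div_iff_mul_le (Or.inr (hpos.trans_le (hzr.trans hsup)).ne')
      (Or.inl (by rw [fK]; exact measure_ne_top _ _))]
    calc 2 * fK (axisMeasure ν) (ball 0 1) w r ≤ 2 * (C * volume (ball (w 0) r)) := by
          gcongr
          exact (fK_axisMeasure_le ν w hr).trans hCr
      _ ≤ ((2 * C + 1 : ℝ≥0) : ℝ≥0∞) * volume (ball z r) := by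
          rw [hvol]
          push_cast
          rw [← mul_assoc, add_mul]
          exact le_self_add
      _ ≤ _ := hzr.trans hsup
  obtain ⟨r, h2, hlt⟩ :=
    (hratio.and (hw.eventually (gt_mem_nhds (by norm_num : (1 : ℝ≥0∞) < 2)))).exists
  exact (h2.trans_lt hlt).false

end AxisModes

section StackedMeasure

variable (A : Set ℝ) (a : ℝ)

def stackedPiece (m : ℕ) : Set ℝ := ((m : ℝ) + 2) +ᵥ (A ∩ closedBall a ((4 : ℝ)⁻¹ ^ m))

noncomputable def stackedMeasure : Measure ℝ :=
  volume.restrict (Icc (-1) 1) +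
    Measure.sum fun m => (2 : ℝ≥0∞) ^ m • volume.restrict (stackedPiece A a m)

variable {A a}

theorem stackedPiece_subset (hA : A ⊆ Icc 0 1) (m : ℕ) :
    stackedPiece A a m ⊆ Icc ((m : ℝ) + 2) (m + 3) := by
  rintro _ ⟨y, ⟨hy, -⟩, rfl⟩
  obtain ⟨h0, h1⟩ := hA hy
  simp only [vadd_eq_add, mem_Icc]
  constructor <;> linarith

theorem disjoint_ball_stackedPiece (hA : A ⊆ Icc 0 1) {x r : ℝ} {m : ℕ} (h : x + r ≤ m + 2) :
    Disjoint (ball x r) (stackedPiece A a m) :=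
  disjoint_left.2 fun y hy hy' => by
    have := (stackedPiece_subset hA m hy').1
    rw [mem_ball, Real.dist_eq, abs_lt] at hy
    linarith [hy.2]

theorem irrational_of_mem_stackedPiece (hA : ∀ x ∈ A, Irrational x) {m : ℕ} {x : ℝ}
    (hx : x ∈ stackedPiece A a m) : Irrational x := by
  obtain ⟨y, ⟨hy, -⟩, rfl⟩ := hx
  simpa [add_assoc] using ((hA y hy).natCast_add 2).natCast_add m

theorem locallyFinite_stackedPiece (hA : A ⊆ Icc 0 1) : LocallyFinite (stackedPiece A a) := by
  intro x
  refine ⟨ball x 1, ball_mem_nhds x one_pos, (finite_Iio ⌈x⌉₊).subset fun m hm => ?_⟩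
  by_contra h
  have hm' : ⌈x⌉₊ ≤ m := not_lt.1 h
  refine not_disjoint_iff_nonempty_inter.2 hm (disjoint_ball_stackedPiece hA ?_).symm
  have := (Nat.le_ceil x).trans (Nat.cast_le.2 hm' : (⌈x⌉₊ : ℝ) ≤ m)
  linarith

theorem isClosed_iUnion_stackedPiece (hA : A ⊆ Icc 0 1) (hAc : IsClosed A) :
    IsClosed (⋃ m, stackedPiece A a m) :=
  (locallyFinite_stackedPiece hA).isClosed_iUnion fun _ => (hAc.inter isClosed_closedBall).vadd _

theorem volume_ball_inter_stackedPiece {r : ℝ} {m : ℕ} (hr : r ≤ (4 : ℝ)⁻¹ ^ m) :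
    volume (ball ((m : ℝ) + 2 + a) r ∩ stackedPiece A a m) = volume (ball a r ∩ A) := by
  rw [stackedPiece, ← vadd_eq_add, ← vadd_ball, ← vadd_set_inter, measure_vadd, ← inter_assoc,
    inter_eq_left.2 (inter_subset_left.trans (ball_subset_closedBall.trans
      (closedBall_subset_closedBall hr)))]

theorem two_pow_mul_volume_stackedPiece_le (m : ℕ) :
    2 ^ m * volume (stackedPiece A a m) ≤ 2 * 2⁻¹ ^ m := by
  have h24 : (2 : ℝ≥0∞) * 4⁻¹ = 2⁻¹ := by
    rw [show (4 : ℝ≥0∞) = 2 * 2 by norm_num, ENNReal.mul_inv (by simp) (by simp), ← mul_assoc,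
      ENNReal.mul_inv_cancel (by simp) (by simp), one_mul]
  calc 2 ^ m * volume (stackedPiece A a m) ≤ 2 ^ m * volume (closedBall a ((4 : ℝ)⁻¹ ^ m)) := by
        rw [stackedPiece, measure_vadd]
        gcongr
        exact inter_subset_right
    _ = 2 * 2⁻¹ ^ m := by
        rw [Real.volume_closedBall, ENNReal.ofReal_mul zero_le_two,
          ENNReal.ofReal_pow (by norm_num), ENNReal.ofReal_inv_of_pos (by norm_num), ENNReal.ofReal_ofNat, ENNReal.ofReal_ofNat,
          ← h24, mul_pow]
        ring

theorem stackedMeasure_apply {s : Set ℝ} (hs : MeasurableSet s) :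
    stackedMeasure A a s =
      volume (s ∩ Icc (-1) 1) + ∑' m, 2 ^ m * volume (s ∩ stackedPiece A a m) := by
  simp only [stackedMeasure, Measure.add_apply, Measure.sum_apply _ hs, Measure.smul_apply,
    Measure.restrict_apply hs, smul_eq_mul]

theorem stackedMeasure_apply_of_disjoint {s : Set ℝ} (hs : MeasurableSet s)
    (h : Disjoint s (⋃ m, stackedPiece A a m)) :
    stackedMeasure A a s = volume (s ∩ Icc (-1) 1) := by
  rw [stackedMeasure_apply hs]
  simp [(disjoint_iUnion_right.1 h _).inter_eq]

instance : IsFiniteMeasure (stackedMeasure A a) := by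
  refine ⟨(stackedMeasure_apply MeasurableSet.univ).trans_lt (ENNReal.add_lt_top.2 ⟨?_, ?_⟩)⟩
  · simp [Real.volume_Icc]
  · calc ∑' m, 2 ^ m * volume (univ ∩ stackedPiece A a m) ≤ ∑' m : ℕ, 2 * 2⁻¹ ^ m :=
          ENNReal.tsum_le_tsum fun m => by
            rw [univ_inter]
            exact two_pow_mul_volume_stackedPiece_le m
      _ < ⊤ := by
          rw [ENNReal.tsum_mul_left, ENNReal.tsum_geometric, ENNReal.one_sub_inv_two, inv_inv]
          exact ENNReal.mul_lt_top (by simp) (by simp)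

theorem eventually_stackedMeasure_ball_zero (hA : A ⊆ Icc 0 1) :
    ∀ᶠ r in 𝓝[>] 0, stackedMeasure A a (ball 0 r) = volume (ball (0 : ℝ) r) := by
  filter_upwards [Ioc_mem_nhdsGT one_pos] with r hr
  rw [stackedMeasure_apply_of_disjoint measurableSet_ball (disjoint_iUnion_right.2 fun m =>
      disjoint_ball_stackedPiece hA (by linarith [hr.2, m.cast_nonneg (α := ℝ)])),
    inter_eq_left.2 ((ball_subset_ball hr.2).trans
      (by simp [Real.ball_eq_Ioo, Ioo_subset_Icc_self]))]

theorem eventually_stackedMeasure_ball_rat_le (hA : A ⊆ Icc 0 1) (hAc : IsClosed A)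
    (hAirr : ∀ x ∈ A, Irrational x) (q : ℚ) :
    ∀ᶠ r in 𝓝[>] 0, stackedMeasure A a (ball (q : ℝ) r) ≤ volume (ball (q : ℝ) r) := by
  have hq : (q : ℝ) ∈ (⋃ m, stackedPiece A a m)ᶜ := by
    simp only [mem_compl_iff, mem_iUnion, not_exists]
    exact fun m h => irrational_of_mem_stackedPiece hAirr h ⟨q, rfl⟩
  obtain ⟨ε, hε, hball⟩ :=
    Metric.isOpen_iff.mp (isClosed_iUnion_stackedPiece hA hAc).isOpen_compl q hq
  filter_upwards [Ioo_mem_nhdsGT hε] with r hr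
  rw [stackedMeasure_apply_of_disjoint measurableSet_ball
    (subset_compl_iff_disjoint_right.1 ((ball_subset_ball hr.2.le).trans hball))]
  exact measure_mono inter_subset_left

theorem exists_stackedMeasure_ball_le (hA : A ⊆ Icc 0 1) (x : ℝ) :
    ∃ C : ℝ≥0, ∀ᶠ r in 𝓝[>] 0, stackedMeasure A a (ball x r) ≤ C * volume (ball x r) := by
  refine ⟨1 + ∑ m ∈ Finset.range ⌈x⌉₊, 2 ^ m, ?_⟩
  filter_upwards [Ioc_mem_nhdsGT one_pos] with r hr
  have hfar : ∀ m ∉ Finset.range ⌈x⌉₊, 2 ^ m * volume (ball x r ∩ stackedPiece A a m) = 0 := by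
    intro m hm
    have := (Nat.le_ceil x).trans (Nat.cast_le.2 (not_lt.1 (Finset.mem_range.not.1 hm)) :
      (⌈x⌉₊ : ℝ) ≤ m)
    rw [(disjoint_ball_stackedPiece hA (by linarith [hr.2])).inter_eq, measure_empty, mul_zero]
  rw [stackedMeasure_apply measurableSet_ball, tsum_eq_sum hfar]
  push_cast
  calc volume (ball x r ∩ Icc (-1) 1) +
        ∑ m ∈ Finset.range ⌈x⌉₊, 2 ^ m * volume (ball x r ∩ stackedPiece A a m)
      ≤ volume (ball x r) + ∑ m ∈ Finset.range ⌈x⌉₊, 2 ^ m * volume (ball x r) := by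
        gcongr <;> exact inter_subset_left
    _ = _ := by rw [← Finset.sum_mul]; ring

theorem exists_le_stackedMeasure_ball
    (ha : ∀ᶠ r in 𝓝[>] 0, volume (ball a r) ≤ 2 * volume (ball a r ∩ A)) (C : ℝ≥0) :
    ∃ x, ∀ᶠ r in 𝓝[>] 0, C * volume (ball x r) ≤ stackedMeasure A a (ball x r) := by
  obtain ⟨m, hm⟩ := pow_unbounded_of_one_lt (2 * C) one_lt_two
  refine ⟨m + 2 + a, ?_⟩
  filter_upwards [ha, Ioo_mem_nhdsGT (pow_pos (by norm_num : (0 : ℝ) < 4⁻¹) m)] with r hr hrm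
  calc (C : ℝ≥0∞) * volume (ball ((m : ℝ) + 2 + a) r) = C * volume (ball a r) := by
        simp [Real.volume_ball]
    _ ≤ C * (2 * volume (ball a r ∩ A)) := by gcongr
    _ = ((2 * C : ℝ≥0) : ℝ≥0∞) * volume (ball a r ∩ A) := by push_cast; ring
    _ ≤ 2 ^ m * volume (ball a r ∩ A) := by gcongr; exact_mod_cast hm.le
    _ = 2 ^ m * volume (ball ((m : ℝ) + 2 + a) r ∩ stackedPiece A a m) := by
        rw [volume_ball_inter_stackedPiece hrm.2.le]
    _ ≤ stackedMeasure A a (ball ((m : ℝ) + 2 + a) r) := by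
        rw [stackedMeasure_apply measurableSet_ball]
        exact (ENNReal.le_tsum m).trans le_add_self

end StackedMeasure

/-- Example 4.2. There is a finite nonzero Borel measure `μ` on `ℝ²`
and a point `u ∈ supp(μ)` such that, with `K` the open unit ℓ∞-ball (the sup-norm ball of
`Fin 2 → ℝ`) and `E = ℚ²` (which is dense in `ℝ²`), `u` is an `E`-weak mode of `μ` but not
an `E`-strong mode; moreover `μ` has no strong mode at all. -/
theorem exists_Eweak_not_Estrong :
    Dense {x : Fin 2 → ℝ | ∀ i, ∃ q : ℚ, x i = (q : ℝ)} ∧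
    ∃ μ : Measure (Fin 2 → ℝ), IsFiniteMeasure μ ∧ μ ≠ 0 ∧
      ∃ u : Fin 2 → ℝ, u ∈ measSupport μ ∧
        IsEWeakMode μ (Metric.ball (0 : Fin 2 → ℝ) 1)
          {x : Fin 2 → ℝ | ∀ i, ∃ q : ℚ, x i = (q : ℝ)} u ∧
        ¬ IsEStrongMode μ (Metric.ball (0 : Fin 2 → ℝ) 1)
          {x : Fin 2 → ℝ | ∀ i, ∃ q : ℚ, x i = (q : ℝ)} u ∧
        ∀ w : Fin 2 → ℝ, ¬ IsStrongMode μ (Metric.ball (0 : Fin 2 → ℝ) 1) w := by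
  obtain ⟨A, hAc, hA, hA0, hAirr⟩ := exists_isClosed_subset_Icc_irrational
  obtain ⟨a, ha⟩ := exists_measure_ball_le_two_mul_measure_ball_inter volume hA0
  have h0 := eventually_stackedMeasure_ball_zero (a := a) hA
  have hunb := exists_le_stackedMeasure_ball ha
  have hsupp := zero_mem_measSupport_axisMeasure h0
  exact ⟨dense_rationalPoints (Fin 2), axisMeasure (stackedMeasure A a), inferInstance,
    ne_zero_of_mem_measSupport hsupp, 0, hsupp,
    isEWeakMode_axisMeasure h0 (eventually_stackedMeasure_ball_rat_le hA hAc hAirr),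
    not_isEStrongMode_axisMeasure h0 hunb,
    not_isStrongMode_axisMeasure (exists_stackedMeasure_ball_le hA) hunb⟩
end

section
/- There exists a Borel probability measure μ on ℝ, absolutely continuous with respect to Lebesgue measure, that has no strong mode with respect to K = (−1,1): for every u ∈ ℝ it fails that lim_{r↓0} (sup_{z∈ℝ} μ((z−r, z+r))) / μ((u−r, u+r)) = 1. Concretely, the measure with density ρ(x) = Σ_{n≥1} (1/(2A)) (b/a)ⁿ · 1[|x−n| < b⁻ⁿ], where 1 < a < b, b > 2, and A = Σ_{n≥1} a⁻ⁿ, has this property: for every u ∈ ℝ there are arbitrarily small r > 0 with sup_{z∈ℝ} μ((z−r, z+r)) ≥ (b/a) · μ((u−r, u+r)). -/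
open MeasureTheory Filter Set Topology
open scoped ENNReal NNReal Classical

/-!
The density consists of spikes: on the interval of radius `b⁻ⁿ` around `n` it has height
proportional to `(b/a)ⁿ`, so the `n`-th spike carries mass proportional to `a⁻ⁿ`, and spike
heights grow by the factor `b/a` from one spike to the next. Since `b > 2`, an interval of radius
`r ≤ 1/2` around `u` only meets spikes centred at `n ≤ ⌊u⌋ + 1`, so its mass is at most `2r` times
the height of spike `⌊u⌋ + 1`; an equally small interval centred at `⌊u⌋ + 2` has mass exactly
`2r` times a height that is `b/a` times larger.
-/

theorem ENNReal.not_tendsto_div_nhds_one {α : Type*} {l : Filter α} [l.NeBot]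
    {f g : α → ℝ≥0∞} {c : ℝ≥0∞} (hc : 1 < c) (hg : ∀ x, g x ≠ ∞)
    (h : ∀ᶠ x in l, c * g x ≤ f x ∧ f x ≠ 0) :
    ¬ Tendsto (fun x => f x / g x) l (𝓝 1) := fun hlim => by
  obtain ⟨x, ⟨hcgf, hf⟩, hlt⟩ := (h.and (hlim.eventually_lt_const hc)).exists
  exact hlt.not_ge ((ENNReal.le_div_iff_mul_le (Or.inr hf) (Or.inl (hg x))).2 hcgf)

section WithDensity

variable {α : Type*} [MeasurableSpace α] {μ : Measure α} {f : α → ℝ≥0∞} {s : Set α}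
  {c : ℝ≥0∞}

theorem MeasureTheory.withDensity_apply_eq_mul_of_eqOn (hs : MeasurableSet s)
    (h : EqOn f (fun _ => c) s) : μ.withDensity f s = c * μ s := by
  rw [withDensity_apply _ hs, setLIntegral_congr_fun hs h, setLIntegral_const]

theorem MeasureTheory.withDensity_apply_le_mul_of_forall_le (hs : MeasurableSet s)
    (h : ∀ x ∈ s, f x ≤ c) : μ.withDensity f s ≤ c * μ s := by
  rw [withDensity_apply _ hs, ← setLIntegral_const]
  exact setLIntegral_mono measurable_const h

end WithDensity

section DisjointIndicator

open Function

variable {ι α M : Type*} [AddCommMonoid M] [TopologicalSpace M] {s : ι → Set α} {h : ι → M}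
  {x : α}

theorem tsum_indicator_apply_of_mem (hs : Pairwise (Disjoint on s)) {i : ι} (hx : x ∈ s i) :
    ∑' j, (s j).indicator (fun _ => h j) x = h i := by
  rw [tsum_eq_single i fun j hj =>
    indicator_of_notMem (fun hxj => (hs hj).ne_of_mem hxj hx rfl) _]
  exact indicator_of_mem hx _

theorem tsum_indicator_apply_of_notMem (hx : ∀ i, x ∉ s i) :
    ∑' j, (s j).indicator (fun _ => h j) x = 0 := by
  simp [indicator_of_notMem (hx _)]

end DisjointIndicator

theorem zpow_neg_natCast_add_one {K : Type*} [DivisionRing K] (x : K) (n : ℕ) :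
    x ^ (-((n : ℤ) + 1)) = x⁻¹ ^ (n + 1) := by
  rw [← Nat.cast_succ, zpow_neg, zpow_natCast, inv_pow]

theorem hasSum_zpow_neg_natCast_add_one {a : ℝ} (ha : 1 < a) :
    HasSum (fun n : ℕ => a ^ (-((n : ℤ) + 1))) (a - 1)⁻¹ := by
  have hterm : (fun n : ℕ => a ^ (-((n : ℤ) + 1))) = fun n => a⁻¹ * a⁻¹ ^ n :=
    funext fun n => by rw [zpow_neg_natCast_add_one, pow_succ']
  have hval : a⁻¹ * (1 - a⁻¹)⁻¹ = (a - 1)⁻¹ := by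
    have : a - 1 ≠ 0 := by linarith
    field_simp
  rw [hterm, ← hval]
  exact (hasSum_geometric_of_lt_one (by positivity) (inv_lt_one_of_one_lt₀ ha)).mul_left a⁻¹

noncomputable def spike (b : ℝ) (n : ℕ) : Set ℝ :=
  Metric.ball ((n : ℝ) + 1) (b ^ (-((n : ℤ) + 1)))

/-- `(a - 1) / 2 = 1 / (2A)`, since `A = ∑_{n ≥ 1} a⁻ⁿ = 1 / (a - 1)`. -/
noncomputable def spikeHeight (a b : ℝ) (n : ℕ) : ℝ := (a - 1) / 2 * (b / a) ^ (n + 1)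

noncomputable def spikeDensity (a b : ℝ) (x : ℝ) : ℝ≥0∞ :=
  ENNReal.ofReal (∑' n, (spike b n).indicator (fun _ => spikeHeight a b n) x)

noncomputable def spikeMeasure (a b : ℝ) : Measure ℝ := volume.withDensity (spikeDensity a b)

section Spikes

open Function Metric

variable {a b : ℝ}

theorem spike_subset_ball_half (hb : 2 < b) (n : ℕ) :
    spike b n ⊆ ball ((n : ℝ) + 1) (1 / 2) := by
  refine ball_subset_ball ?_
  rw [zpow_neg_natCast_add_one]
  have hinv : b⁻¹ < 1 / 2 := by rw [inv_lt_comm₀] <;> linarith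
  exact (pow_le_of_le_one (by positivity) (by linarith) n.succ_ne_zero).trans hinv.le

theorem pairwise_disjoint_spike (hb : 2 < b) : Pairwise (Disjoint on spike b) := by
  intro m n hmn
  refine (ball_disjoint_ball ?_).mono (spike_subset_ball_half hb m) (spike_subset_ball_half hb n)
  have : (1 : ℝ) ≤ |(m : ℝ) - n| := by
    exact_mod_cast Int.one_le_abs (sub_ne_zero.2 (Int.ofNat_inj.not.2 hmn))
  rw [Real.dist_eq]
  convert this using 2 <;> ring

theorem spikeDensity_of_mem (hb : 2 < b) {x : ℝ} {n : ℕ} (hx : x ∈ spike b n) :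
    spikeDensity a b x = ENNReal.ofReal (spikeHeight a b n) := by
  rw [spikeDensity, tsum_indicator_apply_of_mem (pairwise_disjoint_spike hb) hx]

theorem spikeDensity_of_forall_notMem {x : ℝ} (hx : ∀ n, x ∉ spike b n) :
    spikeDensity a b x = 0 := by
  rw [spikeDensity, tsum_indicator_apply_of_notMem hx, ENNReal.ofReal_zero]

theorem spikeHeight_succ (n : ℕ) : spikeHeight a b (n + 1) = b / a * spikeHeight a b n := by
  rw [spikeHeight, spikeHeight, pow_succ]
  ring

theorem spikeHeight_pos (ha : 1 < a) (hab : a < b) (n : ℕ) : 0 < spikeHeight a b n := by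
  have : 0 < b := by linarith
  unfold spikeHeight
  positivity

theorem monotone_spikeHeight (ha : 1 < a) (hab : a < b) : Monotone (spikeHeight a b) := by
  refine monotone_nat_of_le_succ fun n => ?_
  rw [spikeHeight_succ]
  have : 1 ≤ b / a := by rw [one_le_div₀] <;> linarith
  exact le_mul_of_one_le_left (spikeHeight_pos ha hab n).le this

theorem spikeMeasure_ball_eq (hb : 2 < b) {m : ℕ} {r : ℝ} (hr : r ≤ b ^ (-((m : ℤ) + 1))) :
    spikeMeasure a b (ball ((m : ℝ) + 1) r) =
      ENNReal.ofReal (spikeHeight a b m) * ENNReal.ofReal (2 * r) := by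
  rw [spikeMeasure, withDensity_apply_eq_mul_of_eqOn measurableSet_ball, Real.volume_ball]
  exact fun x hx => spikeDensity_of_mem hb (ball_subset_ball hr hx)

theorem spikeMeasure_ball_le (ha : 1 < a) (hab : a < b) (hb : 2 < b) (u : ℝ) {r : ℝ}
    (hr : r ≤ 1 / 2) :
    spikeMeasure a b (ball u r) ≤
      ENNReal.ofReal (spikeHeight a b ⌊u⌋₊) * ENNReal.ofReal (2 * r) := by
  rw [spikeMeasure, ← Real.volume_ball]
  refine withDensity_apply_le_mul_of_forall_le measurableSet_ball fun x hx => ?_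
  by_cases hspike : ∃ n, x ∈ spike b n
  · obtain ⟨n, hn⟩ := hspike
    have hxn := mem_ball.1 (spike_subset_ball_half hb n hn)
    rw [Real.dist_eq, abs_lt] at hxn
    rw [mem_ball, Real.dist_eq, abs_lt] at hx
    have hnu : n ≤ ⌊u⌋₊ := Nat.le_floor (by linarith)
    rw [spikeDensity_of_mem hb hn]
    exact ENNReal.ofReal_le_ofReal (monotone_spikeHeight ha hab hnu)
  · rw [spikeDensity_of_forall_notMem (not_exists.1 hspike)]
    exact zero_le

theorem isProbabilityMeasure_spikeMeasure (ha : 1 < a) (hab : a < b) (hb : 2 < b) :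
    IsProbabilityMeasure (spikeMeasure a b) := by
  have hmeas : MeasurableSet (⋃ n, spike b n) := MeasurableSet.iUnion fun _ => measurableSet_ball
  have hspike (n : ℕ) :
      spikeMeasure a b (spike b n) = ENNReal.ofReal ((a - 1) * a ^ (-((n : ℤ) + 1))) := by
    rw [spike, spikeMeasure_ball_eq hb le_rfl,
      ← ENNReal.ofReal_mul (spikeHeight_pos ha hab n).le]
    congr 1
    rw [spikeHeight, zpow_neg_natCast_add_one, zpow_neg_natCast_add_one, div_pow, inv_pow, inv_pow]
    field_simp
  have hcompl : spikeMeasure a b (⋃ n, spike b n)ᶜ = 0 := by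
    rw [spikeMeasure, withDensity_apply_eq_mul_of_eqOn hmeas.compl (c := 0), zero_mul]
    intro x hx
    exact spikeDensity_of_forall_notMem (by simpa using hx)
  have hsum := (hasSum_zpow_neg_natCast_add_one ha).mul_left (a - 1)
  rw [mul_inv_cancel₀ (by linarith : a - 1 ≠ 0)] at hsum
  constructor
  rw [← measure_add_measure_compl hmeas, hcompl, add_zero,
    measure_iUnion (pairwise_disjoint_spike hb) fun _ => measurableSet_ball]
  simp_rw [hspike]
  rw [← ENNReal.ofReal_tsum_of_nonneg (fun n => by positivity) hsum.summable, hsum.tsum_eq,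
    ENNReal.ofReal_one]

theorem spikeDensity_eq (ha : 1 < a) :
    spikeDensity a b = fun x => ENNReal.ofReal
      (∑' n : ℕ,
        if |x - ((n : ℝ) + 1)| < b ^ (-((n : ℤ) + 1))
        then (1 / (2 * ∑' m : ℕ, a ^ (-((m : ℤ) + 1)))) * (b / a) ^ (n + 1)
        else 0) := by
  have hnorm : 1 / (2 * ∑' m : ℕ, a ^ (-((m : ℤ) + 1))) = (a - 1) / 2 := by
    rw [(hasSum_zpow_neg_natCast_add_one ha).tsum_eq]
    field_simp
  ext x
  simp only [spikeDensity, spike, spikeHeight, hnorm, indicator_apply, mem_ball, Real.dist_eq]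

theorem eventually_mul_spikeMeasure_ball_le_iSup (ha : 1 < a) (hab : a < b) (hb : 2 < b)
    (u : ℝ) :
    ∀ᶠ r in 𝓝[>] 0,
      ENNReal.ofReal (b / a) * spikeMeasure a b (ball u r) ≤ ⨆ z, spikeMeasure a b (ball z r) ∧
        ⨆ z, spikeMeasure a b (ball z r) ≠ 0 := by
  set m := ⌊u⌋₊ + 1
  have hrad : 0 < b ^ (-((m : ℤ) + 1)) := zpow_pos (by linarith) _
  filter_upwards [Ioc_mem_nhdsGT (lt_min (by norm_num : (0 : ℝ) < 1 / 2) hrad)] with r ⟨hr0, hr⟩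
  have hcenter := spikeMeasure_ball_eq (a := a) hb (hr.trans (min_le_right _ _))
  have hle_iSup := le_iSup (fun z => spikeMeasure a b (ball z r)) ((m : ℝ) + 1)
  refine ⟨?_, ne_bot_of_le_ne_bot ?_ hle_iSup⟩
  · calc ENNReal.ofReal (b / a) * spikeMeasure a b (ball u r)
        ≤ ENNReal.ofReal (b / a) *
            (ENNReal.ofReal (spikeHeight a b ⌊u⌋₊) * ENNReal.ofReal (2 * r)) :=
          mul_le_mul_right (spikeMeasure_ball_le ha hab hb u (hr.trans (min_le_left _ _))) _
      _ = spikeMeasure a b (ball ((m : ℝ) + 1) r) := by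
          rw [hcenter, spikeHeight_succ, ENNReal.ofReal_mul (p := b / a) (by positivity),
            mul_assoc]
      _ ≤ _ := hle_iSup
  · rw [hcenter]
    exact mul_ne_zero (ENNReal.ofReal_pos.2 (spikeHeight_pos ha hab m)).ne'
      (ENNReal.ofReal_pos.2 (by linarith)).ne'

end Spikes

/-- Example 5.7. A Borel probability measure on `ℝ`, absolutely
continuous w.r.t. Lebesgue measure, with no strong mode w.r.t. `K = (−1,1)`: the measure
with density `ρ(x) = Σ_{n≥1} (1/(2A)) (b/a)ⁿ · 1[|x−n| < b⁻ⁿ]` (where `1 < a < b`,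
`b > 2`, `A = Σ_{n≥1} a⁻ⁿ`) satisfies, for every `u ∈ ℝ`:
the small-ball ratio does not tend to `1`, and indeed there are arbitrarily small `r > 0`
with `sup_z μ((z−r,z+r)) ≥ (b/a) · μ((u−r,u+r))`. -/
theorem exists_probability_measure_without_strong_mode
    (a b : ℝ) (ha : 1 < a) (hab : a < b) (hb : 2 < b) :
    ∃ μ : Measure ℝ, IsProbabilityMeasure μ ∧ μ ≪ volume ∧
      μ = volume.withDensity (fun x => ENNReal.ofReal
        (∑' n : ℕ,
          if |x - ((n : ℝ) + 1)| < b ^ (-((n : ℤ) + 1))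
          then (1 / (2 * ∑' m : ℕ, a ^ (-((m : ℤ) + 1)))) * (b / a) ^ (n + 1)
          else 0)) ∧
      ∀ u : ℝ,
        (¬ Tendsto
            (fun r : ℝ => (⨆ z : ℝ, μ (Ioo (z - r) (z + r))) / μ (Ioo (u - r) (u + r)))
            (𝓝[>] (0:ℝ)) (𝓝 1)) ∧
        ∀ ε : ℝ, 0 < ε → ∃ r : ℝ, 0 < r ∧ r < ε ∧
          ENNReal.ofReal (b / a) * μ (Ioo (u - r) (u + r)) ≤
            ⨆ z : ℝ, μ (Ioo (z - r) (z + r)) := by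
  have hprob := isProbabilityMeasure_spikeMeasure ha hab hb
  refine ⟨spikeMeasure a b, hprob, withDensity_absolutelyContinuous _ _,
    by rw [spikeMeasure, spikeDensity_eq ha], fun u => ?_⟩
  have hev := eventually_mul_spikeMeasure_ball_le_iSup ha hab hb u
  simp only [Real.ball_eq_Ioo] at hev
  have hba : 1 < ENNReal.ofReal (b / a) := by
    rw [← ENNReal.ofReal_one, ENNReal.ofReal_lt_ofReal_iff (by positivity),
      one_lt_div (by linarith)]
    exact hab
  refine ⟨ENNReal.not_tendsto_div_nhds_one hba (fun r => measure_ne_top _ _) hev, fun ε hε => ?_⟩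
  obtain ⟨r, ⟨hle, -⟩, hr0, hrε⟩ := (hev.and (Ioo_mem_nhdsGT hε)).exists
  exact ⟨r, hr0, hrε, hle⟩
end
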